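/- Let E be an S-dominating effect algebra and S ⊆ S(E). If the join of S computed in the poset S(E) exists, then it is also the join of S computed in E. -/

import Mathlib

universe u v

/-- An effect algebra: a partial algebra `(E; ⊕, 0, 1)` with `0 ≠ 1`, where `⊕` is
partially defined (domain `D`), commutative and associative where defined, every
element has a unique orthosupplement (`compl`, skolemizing axiom (Eiii)), and
`1 ⊕ x` defined implies `x = 0`. -/
structure EffectAlgebra (E : Type u) where
  D : E → E → Prop
  oplus : E → E → E
  zero : E
  one : E
  zero_ne_one : zero ≠ one
  D_comm : ∀ x y, D x y → D y x
  oplus_comm : ∀ x y, D x y → oplus x y = oplus y x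
  assoc : ∀ x y z, D x y → D (oplus x y) z →
      D y z ∧ D x (oplus y z) ∧ oplus (oplus x y) z = oplus x (oplus y z)
  assoc' : ∀ x y z, D y z → D x (oplus y z) →
      D x y ∧ D (oplus x y) z ∧ oplus (oplus x y) z = oplus x (oplus y z)
  compl : E → E
  D_compl : ∀ x, D x (compl x)
  oplus_compl : ∀ x, oplus x (compl x) = one
  compl_unique : ∀ x y, D x y → oplus x y = one → y = compl x
  one_max : ∀ x, D one x → x = zero

namespace EffectAlgebra

variable {E : Type u} (A : EffectAlgebra E)

/-- The induced order: `x ≤ y` iff `x ⊕ z = y` for some `z`. -/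
def le (x y : E) : Prop := ∃ z, A.D x z ∧ A.oplus x z = y

def IsLB (S : Set E) (m : E) : Prop := ∀ x ∈ S, A.le m x
def IsUB (S : Set E) (m : E) : Prop := ∀ x ∈ S, A.le x m

/-- `m` is the infimum of `S` computed within the subposet `P`. -/
def IsInfIn (P : Set E) (S : Set E) (m : E) : Prop :=
  m ∈ P ∧ A.IsLB S m ∧ ∀ z ∈ P, A.IsLB S z → A.le z m

/-- `m` is the supremum of `S` computed within the subposet `P`. -/
def IsSupIn (P : Set E) (S : Set E) (m : E) : Prop :=
  m ∈ P ∧ A.IsUB S m ∧ ∀ z ∈ P, A.IsUB S z → A.le m z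

/-- `w` is sharp iff the meet `w ∧ w'` exists in `E` and equals `0`. -/
def Sharp (w : E) : Prop := A.IsInfIn Set.univ {w, A.compl w} A.zero

/-- The set `S(E)` of sharp elements. -/
def sharpSet : Set E := {w | A.Sharp w}

def HasMeet (x y : E) : Prop := ∃ m, A.IsInfIn Set.univ {x, y} m
def HasJoin (x y : E) : Prop := ∃ j, A.IsSupIn Set.univ {x, y} j

/-- Every `x` has a least sharp element above it, which is the infimum of the sharp
elements above `x` both in `E` and in `S(E)`. -/
def SharplyDominating : Prop :=
  ∀ x : E, ∃ w, A.Sharp w ∧ A.le x w ∧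
    A.IsInfIn Set.univ {v | A.Sharp v ∧ A.le x v} w ∧
    A.IsInfIn A.sharpSet {v | A.Sharp v ∧ A.le x v} w

/-- Sharply dominating, and `x ∧ w` exists for every `x ∈ E`, `w ∈ S(E)`. -/
def SDominating : Prop :=
  A.SharplyDominating ∧ ∀ x w : E, A.Sharp w → A.HasMeet x w

end EffectAlgebra

/-- `SumDef A l s` : the orthosum of the finite list `l` is defined and equals `s`. -/
inductive EffectAlgebra.SumDef {E : Type u} (A : EffectAlgebra E) : List E → E → Prop
  | nil : EffectAlgebra.SumDef A [] A.zero
  | cons {x : E} {l : List E} {s : E} : EffectAlgebra.SumDef A l s → A.D x s →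
      EffectAlgebra.SumDef A (x :: l) (A.oplus x s)

namespace EffectAlgebra

variable {E : Type u} (A : EffectAlgebra E)

/-- A family is orthogonal iff every finite subfamily has a defined orthosum. -/
def Orthogonal {ι : Type v} (x : ι → E) : Prop :=
  ∀ l : List ι, l.Nodup → ∃ s, A.SumDef (l.map x) s

/-- The set of finite partial orthosums of a family. -/
def finiteSums {ι : Type v} (x : ι → E) : Set E :=
  {s | ∃ l : List ι, l.Nodup ∧ A.SumDef (l.map x) s}

/-- `v = ⊕ x` : the family is orthogonal and `v` is the supremum in `E` of all
finite partial orthosums. -/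
def HasOrthoSum {ι : Type v} (x : ι → E) (v : E) : Prop :=
  A.Orthogonal x ∧ A.IsSupIn Set.univ (A.finiteSums x) v

/-- Every family dominated elementwise by an orthogonal family of sharp
elements has an orthosum. -/
def SharplyOrthocomplete : Prop :=
  ∀ (ι : Type u) (x w : ι → E), (∀ k, A.Sharp (w k)) → A.Orthogonal w →
    (∀ k, A.le (x k) (w k)) → ∃ v, A.HasOrthoSum x v

/-- `c` is central: for every `y` the meets `y ∧ c`, `y ∧ c'` exist and
`y = (y ∧ c) ∨ (y ∧ c')`. -/
def Central (c : E) : Prop :=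
  ∀ y : E, ∃ m₁ m₂, A.IsInfIn Set.univ {y, c} m₁ ∧
    A.IsInfIn Set.univ {y, A.compl c} m₂ ∧ A.IsSupIn Set.univ {m₁, m₂} y

/-- The center `C(E)`. -/
def centerSet : Set E := {c | A.Central c}

def CentrallyDominating : Prop :=
  ∀ x : E, ∃ c, A.Central c ∧ A.le x c ∧
    A.IsInfIn Set.univ {d | A.Central d ∧ A.le x d} c ∧
    A.IsInfIn A.centerSet {d | A.Central d ∧ A.le x d} c

def CentrallyOrthocomplete : Prop :=
  ∀ (ι : Type u) (x c : ι → E), (∀ k, A.Central (c k)) → A.Orthogonal c →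
    (∀ k, A.le (x k) (c k)) → ∃ v, A.HasOrthoSum x v

/-- `P` is bifull in `E`: for `S ⊆ P`, the join of `S` in `P` exists iff the join
of `S` in `E` exists, and then they coincide. -/
def Bifull (P : Set E) : Prop :=
  ∀ S ⊆ P, (∀ s, A.IsSupIn P S s → A.IsSupIn Set.univ S s) ∧
    (∀ s, A.IsSupIn Set.univ S s → A.IsSupIn P S s)

/-- The subposet `P` is a complete lattice: every subset of `P` has a supremum
(and an infimum) computed within `P`. -/
def CompleteIn (P : Set E) : Prop :=
  ∀ S ⊆ P, (∃ s, A.IsSupIn P S s) ∧ (∃ m, A.IsInfIn P S m)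

/-- `E` is a complete lattice. -/
def Complete : Prop :=
  ∀ S : Set E, (∃ s, A.IsSupIn Set.univ S s) ∧ (∃ m, A.IsInfIn Set.univ S m)

/-- The induced order of `E` is a lattice. -/
def LatticeOrdered : Prop := ∀ x y : E, A.HasMeet x y ∧ A.HasJoin x y

/-- `x ↔ y` : `x ∨ y = x ⊕ (y ⊖ (x ∧ y))`. -/
def Compatible (x y : E) : Prop :=
  ∃ m j z, A.IsInfIn Set.univ {x, y} m ∧ A.IsSupIn Set.univ {x, y} j ∧
    A.D m z ∧ A.oplus m z = y ∧ A.D x z ∧ A.oplus x z = j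

/-- An MV-effect algebra: a lattice effect algebra all of whose pairs of elements
are compatible. -/
def MV : Prop := A.LatticeOrdered ∧ ∀ x y : E, A.Compatible x y

/-- `nx = x ⊕ ⋯ ⊕ x` (`n` times) is defined. -/
def nTimesDef (n : ℕ) (x : E) : Prop := ∃ s, A.SumDef (List.replicate n x) s

/-- `ord x < ∞` for every nonzero `x`. -/
def IsArchimedean : Prop := ∀ x : E, x ≠ A.zero → ∃ n : ℕ, ¬ A.nTimesDef n x

def Atom (a : E) : Prop := a ≠ A.zero ∧ ∀ b, A.le b a → b = A.zero ∨ b = a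

def Atomic : Prop := ∀ x : E, x ≠ A.zero → ∃ a, A.Atom a ∧ A.le a x

/-- The subposet `P` (closed under `'`) is an orthomodular lattice. -/
def OrthomodularIn (P : Set E) : Prop :=
  (∀ x ∈ P, ∀ y ∈ P, (∃ m, A.IsInfIn P {x, y} m) ∧ (∃ j, A.IsSupIn P {x, y} j)) ∧
  A.zero ∈ P ∧ A.one ∈ P ∧ (∀ x ∈ P, A.compl x ∈ P) ∧
  (∀ x ∈ P, A.IsInfIn P {x, A.compl x} A.zero ∧ A.IsSupIn P {x, A.compl x} A.one) ∧
  (∀ x ∈ P, ∀ y ∈ P, A.le x y →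
    ∃ m, A.IsInfIn P {y, A.compl x} m ∧ A.IsSupIn P {x, m} y)

def DistributiveIn (P : Set E) : Prop :=
  ∀ x ∈ P, ∀ y ∈ P, ∀ z ∈ P, ∀ jyz mxy mxz m : E,
    A.IsSupIn P {y, z} jyz → A.IsInfIn P {x, y} mxy → A.IsInfIn P {x, z} mxz →
    A.IsInfIn P {x, jyz} m → A.IsSupIn P {mxy, mxz} m

/-- The subposet `P` is a Boolean algebra (complemented distributive lattice with
bounds, complement given by `'`). -/
def BooleanIn (P : Set E) : Prop :=
  (∀ x ∈ P, ∀ y ∈ P, (∃ m, A.IsInfIn P {x, y} m) ∧ (∃ j, A.IsSupIn P {x, y} j)) ∧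
  A.zero ∈ P ∧ A.one ∈ P ∧ (∀ x ∈ P, A.compl x ∈ P) ∧
  (∀ x ∈ P, A.IsInfIn P {x, A.compl x} A.zero ∧ A.IsSupIn P {x, A.compl x} A.one) ∧
  A.DistributiveIn P

/-- A block: a maximal set of pairwise compatible elements. -/
def Block (M : Set E) : Prop :=
  (∀ x ∈ M, ∀ y ∈ M, A.Compatible x y) ∧
  ∀ N : Set E, M ⊆ N → (∀ x ∈ N, ∀ y ∈ N, A.Compatible x y) → N = M

def AtomIn (M : Set E) (a : E) : Prop :=
  a ∈ M ∧ a ≠ A.zero ∧ ∀ b ∈ M, A.le b a → b = A.zero ∨ b = a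

def AtomicIn (M : Set E) : Prop :=
  ∀ x ∈ M, x ≠ A.zero → ∃ a, A.AtomIn M a ∧ A.le a x

end EffectAlgebra

/-!
Sharp elements are closed under `'`, and `s ≤ u` iff `u' ≤ s'`; so if `w` is the least sharp
element above `u'`, then `w'` is the greatest sharp element below `u`. Hence an upper bound `u`
in `E` of a set of sharp elements lies above the sharp upper bound `w'`, and so above their join
in `S(E)`.
-/

namespace EffectAlgebra

variable {E : Type u} (A : EffectAlgebra E)

theorem compl_compl (x : E) : A.compl (A.compl x) = x :=
  (A.compl_unique (A.compl x) x (A.D_comm _ _ (A.D_compl x))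
    ((A.oplus_comm _ _ (A.D_compl x)).symm.trans (A.oplus_compl x))).symm

theorem le_trans {x y z : E} (hxy : A.le x y) (hyz : A.le y z) : A.le x z := by
  obtain ⟨a, ha, rfl⟩ := hxy
  obtain ⟨b, hb, rfl⟩ := hyz
  obtain ⟨-, hx, hassoc⟩ := A.assoc x a b ha hb
  exact ⟨A.oplus a b, hx, hassoc.symm⟩

theorem compl_le_compl {x y : E} (h : A.le x y) : A.le (A.compl y) (A.compl x) := by
  obtain ⟨c, hc, rfl⟩ := h
  obtain ⟨hcy, hx, hassoc⟩ := A.assoc x c _ hc (A.D_compl (A.oplus x c))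
  -- `x ⊕ (c ⊕ y') = 1`, so `c ⊕ y'` is the orthosupplement of `x`
  have hcompl : A.oplus c (A.compl (A.oplus x c)) = A.compl x :=
    A.compl_unique x _ hx (hassoc.symm.trans (A.oplus_compl _))
  exact ⟨c, A.D_comm _ _ hcy, (A.oplus_comm _ _ (A.D_comm _ _ hcy)).trans hcompl⟩

theorem le_compl_comm {x y : E} (h : A.le x (A.compl y)) : A.le y (A.compl x) := by
  simpa only [compl_compl] using A.compl_le_compl h

theorem compl_le_comm {x y : E} (h : A.le (A.compl x) y) : A.le (A.compl y) x := by
  simpa only [compl_compl] using A.compl_le_compl h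

theorem sharp_compl {w : E} (h : A.Sharp w) : A.Sharp (A.compl w) := by
  unfold Sharp at *
  rwa [compl_compl, Set.pair_comm]

theorem SharplyDominating.exists_greatest_sharp_le {A : EffectAlgebra E}
    (h : A.SharplyDominating) (u : E) :
    ∃ v ∈ A.sharpSet, A.le v u ∧ ∀ s ∈ A.sharpSet, A.le s u → A.le s v := by
  obtain ⟨w, hw, huw, ⟨-, hwLB, -⟩, -⟩ := h (A.compl u)
  refine ⟨A.compl w, A.sharp_compl hw, A.compl_le_comm huw, fun s hs hsu => ?_⟩
  exact A.le_compl_comm (hwLB _ ⟨A.sharp_compl hs, A.compl_le_compl hsu⟩)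

theorem isSupIn_univ_of_isSupIn {P S : Set E} {z : E}
    (hP : ∀ u, ∃ v ∈ P, A.le v u ∧ ∀ s ∈ P, A.le s u → A.le s v)
    (hS : S ⊆ P) (hz : A.IsSupIn P S z) : A.IsSupIn Set.univ S z := by
  obtain ⟨-, hzUB, hzLeast⟩ := hz
  refine ⟨Set.mem_univ z, hzUB, fun u _ hu => ?_⟩
  obtain ⟨v, hvP, hvu, hvGreatest⟩ := hP u
  exact A.le_trans (hzLeast v hvP fun s hs => hvGreatest s (hS hs) (hu s hs)) hvu

end EffectAlgebra

/-- In an S-dominating effect algebra, a join of sharp elements computed in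
`S(E)` is also their join in `E`. -/
theorem stmt5 {E : Type u} (A : EffectAlgebra E) (hSD : A.SDominating)
    (S : Set E) (hS : S ⊆ A.sharpSet) (z : E)
    (hz : A.IsSupIn A.sharpSet S z) :
    A.IsSupIn Set.univ S z :=
  A.isSupIn_univ_of_isSupIn hSD.1.exists_greatest_sharp_le hS hz
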